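/- For any real numbers α, β > 0 with 2α + β = 1, and any positive integer n such that αn and βn are integers, αn ≥ 4, and αn is divisible by two, there exists a graph G on n vertices and an edge coloring of G with n colors such that αn color classes are matchings of size two, βn color classes are stars of size two, (1 − α − β)n = αn color classes consist of a single edge, and the rainbow girth of G is at least min(αn, βn/2). -/

import Mathlib

/-- The color class of color `i` in graph `G` under the edge coloring `c`. -/
def colorClass {V : Type*} {κ : Type*} (G : SimpleGraph V) (c : Sym2 V → κ) (i : κ) :
    Set (Sym2 V) :=
  {e | e ∈ G.edgeSet ∧ c e = i}

/-- `F` contains a matching of size two: two vertex-disjoint edges. -/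
def ContainsMatchingTwo {V : Type*} (F : Set (Sym2 V)) : Prop :=
  ∃ e f, e ∈ F ∧ f ∈ F ∧ e ≠ f ∧ ∀ v : V, v ∈ e → v ∉ f

/-- `F` contains a star of size two: two distinct edges sharing a vertex. -/
def ContainsStarTwo {V : Type*} (F : Set (Sym2 V)) : Prop :=
  ∃ e f, e ∈ F ∧ f ∈ F ∧ e ≠ f ∧ ∃ v : V, v ∈ e ∧ v ∈ f

/-- `F` contains a triangle: three edges forming a cycle of length three. -/
def ContainsTriangle {V : Type*} (F : Set (Sym2 V)) : Prop :=
  ∃ x y z : V, x ≠ y ∧ y ≠ z ∧ x ≠ z ∧ s(x, y) ∈ F ∧ s(y, z) ∈ F ∧ s(x, z) ∈ F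

/-- The rainbow girth of `G` under the edge coloring `c` is at most `L`:
there is a cycle whose edges have pairwise distinct colors and whose length is at most `L`. -/
def RainbowGirthLE {V : Type*} {κ : Type*} (G : SimpleGraph V) (c : Sym2 V → κ) (L : ℝ) : Prop :=
  ∃ (v : V) (w : G.Walk v v), w.IsCycle ∧ (w.edges.map c).Nodup ∧ (w.length : ℝ) ≤ L

/-- `F` is (exactly) a matching of size two: two vertex-disjoint edges. -/
def IsMatchingTwo {V : Type*} (F : Set (Sym2 V)) : Prop :=
  ∃ e f : Sym2 V, e ≠ f ∧ (∀ v : V, v ∈ e → v ∉ f) ∧ F = {e, f}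

/-- `F` is (exactly) a star of size two: two distinct edges sharing a vertex. -/
def IsStarTwo {V : Type*} (F : Set (Sym2 V)) : Prop :=
  ∃ e f : Sym2 V, e ≠ f ∧ (∃ v : V, v ∈ e ∧ v ∈ f) ∧ F = {e, f}

/-- `F` consists of a single edge. -/
def IsSingleEdge {V : Type*} (F : Set (Sym2 V)) : Prop :=
  ∃ e : Sym2 V, F = {e}


namespace RGE

abbrev PV (a b : ℕ) : Type := (Fin a × Bool) ⊕ Fin b

variable (a b : ℕ)

/-- top/bottom cycle edges (pair `k`, copy `σ`) -/
def pe [NeZero a] (k : Fin a) (σ : Bool) : Sym2 (PV a b) :=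
  s(Sum.inl (k, σ), Sum.inl (k+1, σ))

/-- rung edges -/
def rung (k : Fin a) : Sym2 (PV a b) := s(Sum.inl (k, false), Sum.inl (k, true))

/-- star edges at extra vertex `j` -/
def zedge [NeZero a] (j : Fin b) (σ : Bool) : Sym2 (PV a b) :=
  s(Sum.inr j, Sum.inl ((0 : Fin a), σ))

def ES [NeZero a] : Set (Sym2 (PV a b)) :=
  {e | (∃ k σ, e = pe a b k σ) ∨ (∃ k, e = rung a b k) ∨ ∃ j σ, e = zedge a b j σ}

def PG [NeZero a] : SimpleGraph (PV a b) := SimpleGraph.fromEdgeSet (ES a b)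

instance [NeZero a] : NeZero (2*a+b) := ⟨by have := Nat.pos_of_ne_zero (NeZero.ne a); omega⟩

def mkA [NeZero a] (k : Fin a) : Fin (2*a+b) := ⟨k.val, by have := k.isLt; omega⟩
def mkB [NeZero a] (j : Fin b) : Fin (2*a+b) :=
  ⟨a + j.val, by have := j.isLt; have := Nat.pos_of_ne_zero (NeZero.ne a); omega⟩
def mkD [NeZero a] (k : Fin a) : Fin (2*a+b) := ⟨a + b + k.val, by have := k.isLt; omega⟩

def cfun [NeZero a] : PV a b → PV a b → Fin (2*a+b)
  | Sum.inl (k, σ), Sum.inl (k', σ') =>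
      if σ = σ' then
        (if k'.val = (k.val+1) % a ∧ k.val = (k'.val+1) % a then 0
         else if k'.val = (k.val+1) % a then mkA a b k
         else if k.val = (k'.val+1) % a then mkA a b k'
         else 0)
      else (if k = k' then mkD a b k else 0)
  | Sum.inl _, Sum.inr j => mkB a b j
  | Sum.inr j, Sum.inl _ => mkB a b j
  | Sum.inr _, Sum.inr _ => 0

lemma cfun_symm [NeZero a] (x y : PV a b) : cfun a b x y = cfun a b y x := by
  rcases x with ⟨k, σ⟩ | j <;> rcases y with ⟨k', σ'⟩ | j' <;> simp only [cfun]
  · by_cases h1 : σ = σ'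
    · rw [if_pos h1, if_pos h1.symm]
      split_ifs <;> first | rfl | (exfalso; tauto)
    · have h1' : ¬ (σ' = σ) := fun h => h1 h.symm
      rw [if_neg h1, if_neg h1']
      by_cases h2 : k = k'
      · subst h2; simp
      · have h2' : ¬ (k' = k) := fun h => h2 h.symm
        rw [if_neg h2, if_neg h2']

def cmap [NeZero a] : Sym2 (PV a b) → Fin (2*a+b) :=
  Sym2.lift ⟨cfun a b, cfun_symm a b⟩

@[simp] lemma cmap_mk [NeZero a] (x y : PV a b) : cmap a b s(x, y) = cfun a b x y := rfl

end RGE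

namespace RGE

section Evals

set_option linter.unusedSectionVars false

variable {a b : ℕ} [NeZero a]

lemma mod_succ_ne (h2 : 2 ≤ a) {x : ℕ} (hx : x < a) : (x+1) % a ≠ x := by
  rcases Nat.lt_or_ge (x+1) a with h | h
  · rw [Nat.mod_eq_of_lt h]; omega
  · have hxa : x + 1 = a := by omega
    rw [hxa, Nat.mod_self]; omega

lemma mod_two_ne (h3 : 3 ≤ a) {x : ℕ} (hx : x < a) : (x+2) % a ≠ x := by
  rcases Nat.lt_or_ge (x+2) a with h | h
  · rw [Nat.mod_eq_of_lt h]; omega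
  · rw [Nat.mod_eq_sub_mod h, Nat.mod_eq_of_lt (by omega)]; omega

lemma val_add_one (h2 : 2 ≤ a) (k : Fin a) : ((k+1 : Fin a)).val = (k.val+1) % a := by
  have h1 : (1 : Fin a).val = 1 := by rw [Fin.val_one']; exact Nat.mod_eq_of_lt (by omega)
  rw [Fin.val_add, h1]

lemma cmap_pe (h4 : 4 ≤ a) (k : Fin a) (σ : Bool) :
    cmap a b (pe a b k σ) = mkA a b k := by
  have hv := val_add_one (a := a) (by omega) k
  have hne : ¬ (k.val = (((k+1 : Fin a)).val + 1) % a) := by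
    rw [hv, Nat.mod_add_mod]
    exact fun h => mod_two_ne (by omega) k.isLt h.symm
  simp only [pe, cmap_mk, cfun]
  rw [if_pos trivial, if_neg (fun hc => hne hc.2), if_pos hv]

lemma cmap_rung (k : Fin a) : cmap a b (rung a b k) = mkD a b k := by
  simp [rung, cfun]

lemma cmap_zedge (j : Fin b) (σ : Bool) : cmap a b (zedge a b j σ) = mkB a b j := rfl

lemma k_ne_succ_succ (h4 : 4 ≤ a) (k : Fin a) : k ≠ k + 1 + 1 := by
  intro h
  have hval := congrArg Fin.val h
  rw [val_add_one (by omega), val_add_one (by omega), Nat.mod_add_mod] at hval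
  exact mod_two_ne (by omega) k.isLt hval.symm

lemma pe_eq_iff (h4 : 4 ≤ a) {k k' : Fin a} {σ σ' : Bool} :
    pe a b k σ = pe a b k' σ' ↔ (k = k' ∧ σ = σ') := by
  constructor
  · intro h
    rw [pe, pe, Sym2.eq_iff] at h
    simp only [Sum.inl.injEq, Prod.mk.injEq] at h
    rcases h with ⟨⟨hk, hσ⟩, -⟩ | ⟨⟨hk1, hσ⟩, ⟨hk2, -⟩⟩
    · exact ⟨hk, hσ⟩
    · exfalso
      apply k_ne_succ_succ h4 k
      rw [hk2]; exact hk1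
  · rintro ⟨rfl, rfl⟩; rfl

lemma edgeSet_PG (h4 : 4 ≤ a) : (PG a b).edgeSet = ES a b := by
  rw [PG, SimpleGraph.edgeSet_fromEdgeSet]
  ext e
  simp only [Set.mem_diff, Set.mem_setOf_eq, and_iff_left_iff_imp]
  intro he hd
  rcases he with ⟨k, σ, rfl⟩ | ⟨k, rfl⟩ | ⟨j, σ, rfl⟩
  · rw [pe, Sym2.mem_diagSet, Sym2.mk_isDiag_iff] at hd
    simp only [Sum.inl.injEq, Prod.mk.injEq] at hd
    have := congrArg Fin.val hd.1
    rw [val_add_one (by omega)] at this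
    exact mod_succ_ne (by omega) k.isLt this.symm
  · rw [rung, Sym2.mem_diagSet, Sym2.mk_isDiag_iff] at hd
    simp at hd
  · rw [zedge, Sym2.mem_diagSet, Sym2.mk_isDiag_iff] at hd
    simp at hd

end Evals

end RGE

namespace RGE

section Parity

variable {V : Type*} {G : SimpleGraph V}

def gf (f : V → ZMod 2) : Sym2 V → ZMod 2 :=
  Sym2.lift ⟨fun u v => f u + f v, fun u v => add_comm _ _⟩

@[simp] lemma gf_mk (f : V → ZMod 2) (x y : V) : gf f s(x,y) = f x + f y := rfl

lemma walk_parity (f : V → ZMod 2) {x y : V} (w : G.Walk x y) :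
    (w.edges.map (gf f)).sum = f x + f y := by
  induction w with
  | nil => simp [CharTwo.add_self_eq_zero]
  | cons h p ih =>
    rw [SimpleGraph.Walk.edges_cons, List.map_cons, List.sum_cons, ih, gf_mk,
      add_assoc, ← add_assoc (f _) (f _) (f _), CharTwo.add_self_eq_zero, zero_add]

lemma parity_card [DecidableEq V] (f : V → ZMod 2) {x : V} (w : G.Walk x x)
    (hnd : w.edges.Nodup) :
    2 ∣ (w.edges.toFinset.filter (fun e => gf f e = 1)).card := by
  have hz : ∀ z : ZMod 2, ¬ z = 1 → z = 0 := by decide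
  have hsum : (w.edges.map (gf f)).sum = 0 := by
    rw [walk_parity]; exact CharTwo.add_self_eq_zero _
  rw [← List.sum_toFinset _ hnd,
    ← Finset.sum_filter_add_sum_filter_not _ (fun e => gf f e = 1)] at hsum
  have h0 : (∑ e ∈ w.edges.toFinset.filter (fun e => ¬ gf f e = 1), gf f e) = 0 :=
    Finset.sum_eq_zero (fun e he => hz _ (Finset.mem_filter.mp he).2)
  have h1 : (∑ e ∈ w.edges.toFinset.filter (fun e => gf f e = 1), gf f e)
      = ((w.edges.toFinset.filter (fun e => gf f e = 1)).card : ZMod 2) := by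
    rw [Finset.sum_congr rfl (fun e he => (Finset.mem_filter.mp he).2)]
    simp
  rw [h0, h1, add_zero] at hsum
  exact (ZMod.natCast_eq_zero_iff _ 2).mp hsum

lemma card_le_one_pair {α : Type*} [DecidableEq α] {F : Finset α} {x y : α}
    (hsub : F ⊆ {x, y}) (hnb : ¬(x ∈ F ∧ y ∈ F)) : F.card ≤ 1 := by
  by_cases hx : x ∈ F
  · have : F ⊆ {x} := by
      intro e he
      rcases Finset.mem_insert.mp (hsub he) with h | h
      · simpa using h
      · exact absurd ⟨hx, (Finset.mem_singleton.mp h) ▸ he⟩ hnb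
    simpa using Finset.card_le_card this
  · have : F ⊆ {y} := by
      intro e he
      rcases Finset.mem_insert.mp (hsub he) with h | h
      · exact absurd (h ▸ he) hx
      · exact h
    simpa using Finset.card_le_card this

lemma empty_of_pair {α : Type*} [DecidableEq α] {F : Finset α} {x y : α}
    (hsub : F ⊆ {x, y}) (hnb : ¬(x ∈ F ∧ y ∈ F)) (he : 2 ∣ F.card) : F = ∅ := by
  have := card_le_one_pair hsub hnb
  have : F.card = 0 := by omega
  exact Finset.card_eq_zero.mp this

lemma pair_iff {α : Type*} [DecidableEq α] {F : Finset α} {x1 x2 y1 y2 : α}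
    (hsub : F ⊆ {x1, x2, y1, y2}) (hx : ¬(x1 ∈ F ∧ x2 ∈ F)) (hy : ¬(y1 ∈ F ∧ y2 ∈ F))
    (hd11 : x1 ≠ y1) (hd12 : x1 ≠ y2) (hd21 : x2 ≠ y1) (hd22 : x2 ≠ y2)
    (he : 2 ∣ F.card) : ((x1 ∈ F ∨ x2 ∈ F) ↔ (y1 ∈ F ∨ y2 ∈ F)) := by
  classical
  set FX := F.filter (fun e => e = x1 ∨ e = x2) with hFX
  set FY := F.filter (fun e => e = y1 ∨ e = y2) with hFY
  have hun : F = FX ∪ FY := by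
    ext e
    constructor
    · intro heF
      have := hsub heF
      simp only [Finset.mem_insert, Finset.mem_singleton] at this
      simp only [Finset.mem_union, hFX, hFY, Finset.mem_filter]
      tauto
    · intro h
      rcases Finset.mem_union.mp h with h | h <;> exact (Finset.mem_filter.mp h).1
  have hdisj : Disjoint FX FY := by
    rw [Finset.disjoint_left]
    intro e heX heY
    have h1 := (Finset.mem_filter.mp heX).2
    have h2 := (Finset.mem_filter.mp heY).2
    rcases h1 with rfl | rfl <;> rcases h2 with h2 | h2 <;> tauto
  have hcard : F.card = FX.card + FY.card := by
    rw [hun]; exact Finset.card_union_of_disjoint hdisj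
  have hsubX : FX ⊆ ({x1, x2} : Finset α) := by
    intro e he
    have := (Finset.mem_filter.mp he).2
    simp only [Finset.mem_insert, Finset.mem_singleton]
    tauto
  have hsubY : FY ⊆ ({y1, y2} : Finset α) := by
    intro e he
    have := (Finset.mem_filter.mp he).2
    simp only [Finset.mem_insert, Finset.mem_singleton]
    tauto
  have hX1 : FX.card ≤ 1 := card_le_one_pair hsubX (fun ⟨h1, h2⟩ =>
    hx ⟨(Finset.mem_filter.mp h1).1, (Finset.mem_filter.mp h2).1⟩)
  have hY1 : FY.card ≤ 1 := card_le_one_pair hsubY (fun ⟨h1, h2⟩ =>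
    hy ⟨(Finset.mem_filter.mp h1).1, (Finset.mem_filter.mp h2).1⟩)
  have hXY : FX.card = FY.card := by
    rw [hcard] at he; omega
  have hmemX : (x1 ∈ F ∨ x2 ∈ F) ↔ FX.Nonempty := by
    constructor
    · rintro (h | h)
      · exact ⟨x1, Finset.mem_filter.mpr ⟨h, Or.inl rfl⟩⟩
      · exact ⟨x2, Finset.mem_filter.mpr ⟨h, Or.inr rfl⟩⟩
    · rintro ⟨e, he⟩
      have h1 := (Finset.mem_filter.mp he).1
      have h2 := (Finset.mem_filter.mp he).2
      rcases h2 with rfl | rfl <;> tauto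
  have hmemY : (y1 ∈ F ∨ y2 ∈ F) ↔ FY.Nonempty := by
    constructor
    · rintro (h | h)
      · exact ⟨y1, Finset.mem_filter.mpr ⟨h, Or.inl rfl⟩⟩
      · exact ⟨y2, Finset.mem_filter.mpr ⟨h, Or.inr rfl⟩⟩
    · rintro ⟨e, he⟩
      have h1 := (Finset.mem_filter.mp he).1
      have h2 := (Finset.mem_filter.mp he).2
      rcases h2 with rfl | rfl <;> tauto
  rw [hmemX, hmemY, ← Finset.card_pos, ← Finset.card_pos, hXY]

end Parity

end RGE

namespace RGE

section Main

set_option linter.unusedSectionVars false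
set_option maxHeartbeats 1000000

variable {a b : ℕ} [NeZero a]

lemma main_length (h4 : 4 ≤ a) {x : PV a b}
    (w : (PG a b).Walk x x) (hc : w.IsCycle)
    (hr : (w.edges.map (cmap a b)).Nodup) : a ≤ w.length := by
  classical
  have hnd : w.edges.Nodup := hc.edges_nodup
  have hEcard : w.edges.toFinset.card = w.length := by
    rw [List.toFinset_card_of_nodup hnd, SimpleGraph.Walk.length_edges]
  set E := w.edges.toFinset with hE
  have hmemE : ∀ e, e ∈ E ↔ e ∈ w.edges := fun e => List.mem_toFinset
  have hcat : ∀ e ∈ E,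
      (∃ k σ, e = pe a b k σ) ∨ (∃ k, e = rung a b k) ∨ ∃ j σ, e = zedge a b j σ := by
    intro e he
    have := w.edges_subset_edgeSet ((hmemE e).mp he)
    rwa [edgeSet_PG h4] at this
  have hinj : ∀ e ∈ E, ∀ e' ∈ E, cmap a b e = cmap a b e' → e = e' := by
    intro e he e' he' hcc
    exact List.inj_on_of_nodup_map hr ((hmemE e).mp he) ((hmemE e').mp he') hcc
  -- Step 1: no star edges in the cycle
  have hz : ∀ (j : Fin b) (σ : Bool), zedge a b j σ ∉ E := by
    intro j σ hmem
    set f : PV a b → ZMod 2 := fun v => if v = Sum.inr j then 1 else 0 with hf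
    have hpar := parity_card (G := PG a b) f w hnd
    rw [← hE] at hpar
    set F := E.filter (fun e => gf f e = 1) with hFdef
    have hval : ∀ σ' : Bool, gf f (zedge a b j σ') = 1 := by
      intro σ'; simp [zedge, gf_mk, hf]
    have hsub : F ⊆ {zedge a b j false, zedge a b j true} := by
      intro e he
      obtain ⟨heE, hval1⟩ := Finset.mem_filter.mp he
      rcases hcat e heE with ⟨k, σ', rfl⟩ | ⟨k, rfl⟩ | ⟨j', σ', rfl⟩
      · exfalso; revert hval1; simp [pe, gf_mk, hf]
      · exfalso; revert hval1; simp [rung, gf_mk, hf]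
      · by_cases hj : j' = j
        · subst hj
          cases σ' <;> simp
        · exfalso; revert hval1; simp [zedge, gf_mk, hf, hj]
    have hnb : ¬(zedge a b j false ∈ F ∧ zedge a b j true ∈ F) := by
      rintro ⟨h1, h2⟩
      have e1 := (Finset.mem_filter.mp h1).1
      have e2 := (Finset.mem_filter.mp h2).1
      have heq : zedge a b j false = zedge a b j true :=
        hinj _ e1 _ e2 (by rw [cmap_zedge, cmap_zedge])
      rw [zedge, zedge, Sym2.eq_iff] at heq
      simp at heq
    have hFempty : F = ∅ := empty_of_pair hsub hnb hpar
    have : zedge a b j σ ∈ F := Finset.mem_filter.mpr ⟨hmem, hval σ⟩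
    rw [hFempty] at this
    exact absurd this (Finset.notMem_empty _)
  set L : Fin a := ⟨a - 1, by omega⟩ with hL
  -- Step 2: cut parity between pair i and pair (a-1)
  have hpair : ∀ (i : ℕ) (hia : i + 1 < a),
      ((pe a b ⟨i, by omega⟩ false ∈ E ∨ pe a b ⟨i, by omega⟩ true ∈ E) ↔
       (pe a b L false ∈ E ∨ pe a b L true ∈ E)) := by
    intro i hia
    set f : PV a b → ZMod 2 := fun v =>
      match v with
      | Sum.inl (k, _) => if k.val ≤ i then 1 else 0
      | Sum.inr _ => 1 with hf
    have hpar := parity_card (G := PG a b) f w hnd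
    rw [← hE] at hpar
    set F := E.filter (fun e => gf f e = 1) with hFdef
    have hvalpe : ∀ (k : Fin a) (σ : Bool),
        gf f (pe a b k σ) = (if k.val ≤ i then 1 else 0) + (if ((k+1 : Fin a)).val ≤ i then 1 else 0) := by
      intro k σ; rfl
    have hgfi : ∀ σ : Bool, gf f (pe a b (⟨i, by omega⟩ : Fin a) σ) = 1 := by
      intro σ
      rw [hvalpe]
      have hv := val_add_one (a := a) (by omega) (⟨i, by omega⟩ : Fin a)
      have : ((⟨i, by omega⟩ : Fin a) + 1).val = i + 1 := by
        rw [hv]; exact Nat.mod_eq_of_lt hia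
      rw [this, if_pos (le_refl i), if_neg (by omega)]
      decide
    have hgfL : ∀ σ : Bool, gf f (pe a b L σ) = 1 := by
      intro σ
      rw [hvalpe]
      have hv := val_add_one (a := a) (by omega) L
      have h0 : ((L + 1 : Fin a)).val = 0 := by
        rw [hv]
        have h1 : (L : Fin a).val = a - 1 := rfl
        rw [h1]
        have : a - 1 + 1 = a := by omega
        rw [this, Nat.mod_self]
      rw [h0, if_neg (show ¬ (a - 1 ≤ i) by omega), if_pos (show 0 ≤ i by omega)]
      decide
    have hsub : F ⊆ {pe a b ⟨i, by omega⟩ false, pe a b ⟨i, by omega⟩ true,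
        pe a b L false, pe a b L true} := by
      intro e he
      obtain ⟨heE, hval1⟩ := Finset.mem_filter.mp he
      rcases hcat e heE with ⟨k, σ', rfl⟩ | ⟨k, rfl⟩ | ⟨j', σ', rfl⟩
      · rw [hvalpe] at hval1
        have hv := val_add_one (a := a) (by omega) k
        have hkor : k = (⟨i, by omega⟩ : Fin a) ∨ k = L := by
          by_cases h1 : k.val ≤ i <;> by_cases h2 : ((k+1 : Fin a)).val ≤ i
          · exfalso; rw [if_pos h1, if_pos h2] at hval1; revert hval1; decide
          · left
            rw [hv] at h2
            rcases Nat.lt_or_ge (k.val + 1) a with hlt | hge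
            · rw [Nat.mod_eq_of_lt hlt] at h2
              exact Fin.ext (show k.val = i by omega)
            · exfalso
              have : k.val + 1 = a := by have := k.isLt; omega
              omega
          · right
            rw [hv] at h2
            rcases Nat.lt_or_ge (k.val + 1) a with hlt | hge
            · exfalso; rw [Nat.mod_eq_of_lt hlt] at h2; omega
            · have : k.val + 1 = a := by have := k.isLt; omega
              exact Fin.ext (show k.val = a - 1 by omega)
          · exfalso; rw [if_neg h1, if_neg h2] at hval1; revert hval1; decide
        rcases hkor with h | h <;> rw [h] <;> rcases σ' with _ | _ <;> simp
      · exfalso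
        rw [rung, gf_mk] at hval1
        have : f (Sum.inl (k, false)) + f (Sum.inl (k, true)) = 0 := by
          simp only [hf]
          exact CharTwo.add_self_eq_zero _
        rw [this] at hval1
        revert hval1; decide
      · exact absurd heE (hz j' σ')
    have hmemF : ∀ (k : Fin a) (σ : Bool), gf f (pe a b k σ) = 1 →
        (pe a b k σ ∈ F ↔ pe a b k σ ∈ E) := by
      intro k σ hgf
      constructor
      · exact fun h => (Finset.mem_filter.mp h).1
      · exact fun h => Finset.mem_filter.mpr ⟨h, hgf⟩
    have hnbx : ¬(pe a b ⟨i, by omega⟩ false ∈ F ∧ pe a b ⟨i, by omega⟩ true ∈ F) := by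
      rintro ⟨h1, h2⟩
      have heq := hinj _ (Finset.mem_filter.mp h1).1 _ (Finset.mem_filter.mp h2).1
        (by rw [cmap_pe h4, cmap_pe h4])
      rw [pe_eq_iff h4] at heq
      exact absurd heq.2 (by decide)
    have hnby : ¬(pe a b L false ∈ F ∧ pe a b L true ∈ F) := by
      rintro ⟨h1, h2⟩
      have heq := hinj _ (Finset.mem_filter.mp h1).1 _ (Finset.mem_filter.mp h2).1
        (by rw [cmap_pe h4, cmap_pe h4])
      rw [pe_eq_iff h4] at heq
      exact absurd heq.2 (by decide)
    have hdL : (⟨i, by omega⟩ : Fin a) ≠ L := by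
      intro h
      have := congrArg Fin.val h
      rw [hL] at this
      simp only at this
      omega
    have hdiff : ∀ σ σ' : Bool, pe a b ⟨i, by omega⟩ σ ≠ pe a b L σ' := by
      intro σ σ' h
      rw [pe_eq_iff h4] at h
      exact hdL h.1
    have hiff := pair_iff hsub hnbx hnby (hdiff false false) (hdiff false true)
      (hdiff true false) (hdiff true true) hpar
    rw [hmemF _ _ (hgfi false), hmemF _ _ (hgfi true), hmemF _ _ (hgfL false),
      hmemF _ _ (hgfL true)] at hiff
    exact hiff
  by_cases hLmem : pe a b L false ∈ E ∨ pe a b L true ∈ E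
  · -- all pairs used : length ≥ a
    have husd : ∀ k : Fin a, pe a b k false ∈ E ∨ pe a b k true ∈ E := by
      intro k
      by_cases hk : k.val + 1 < a
      · have h := hpair k.val hk
        have hkk : (⟨k.val, by omega⟩ : Fin a) = k := Fin.ext rfl
        rw [hkk] at h
        exact h.mpr hLmem
      · have : k = L := Fin.ext (show k.val = a - 1 by have := k.isLt; omega)
        rw [this]; exact hLmem
    set g : Fin a → Sym2 (PV a b) :=
      fun k => if pe a b k false ∈ E then pe a b k false else pe a b k true with hg
    have hgE : ∀ k, g k ∈ E := by
      intro k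
      by_cases h : pe a b k false ∈ E
      · simpa [hg, h] using h
      · have := (husd k).resolve_left h
        simpa [hg, h] using this
    have hgform : ∀ k, ∃ σ, g k = pe a b k σ := by
      intro k
      by_cases h : pe a b k false ∈ E
      · exact ⟨false, by simp [hg, h]⟩
      · exact ⟨true, by simp [hg, h]⟩
    have hginj : Set.InjOn g ↑(Finset.univ : Finset (Fin a)) := by
      intro k _ k' _ hkk
      obtain ⟨σ, hσ⟩ := hgform k
      obtain ⟨σ', hσ'⟩ := hgform k'
      rw [hσ, hσ'] at hkk
      exact ((pe_eq_iff h4).mp hkk).1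
    have := Finset.card_le_card_of_injOn g (fun k _ => hgE k) hginj
    rw [Finset.card_univ, Fintype.card_fin, hEcard] at this
    exact this
  · -- no pairs used at all: contradiction
    exfalso
    have hnp : ∀ (k : Fin a) (σ : Bool), pe a b k σ ∉ E := by
      intro k σ hmem
      by_cases hk : k.val + 1 < a
      · have h := hpair k.val hk
        have hkk : (⟨k.val, by omega⟩ : Fin a) = k := Fin.ext rfl
        rw [hkk] at h
        apply hLmem
        apply h.mp
        cases σ
        · exact Or.inl hmem
        · exact Or.inr hmem
      · have hkL : k = L := Fin.ext (show k.val = a - 1 by have := k.isLt; omega)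
        apply hLmem
        rw [hkL] at hmem
        cases σ
        · exact Or.inl hmem
        · exact Or.inr hmem
    have hnr : ∀ k : Fin a, rung a b k ∉ E := by
      intro k hmem
      set f : PV a b → ZMod 2 := fun v => if v = Sum.inl (k, false) then 1 else 0 with hf
      have hpar := parity_card (G := PG a b) f w hnd
      rw [← hE] at hpar
      set F := E.filter (fun e => gf f e = 1) with hFdef
      have hsub : F ⊆ ({rung a b k} : Finset (Sym2 (PV a b))) := by
        intro e he
        obtain ⟨heE, hval1⟩ := Finset.mem_filter.mp he
        rcases hcat e heE with ⟨k', σ', rfl⟩ | ⟨k', rfl⟩ | ⟨j', σ', rfl⟩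
        · exact absurd heE (hnp k' σ')
        · rw [rung, gf_mk] at hval1
          simp only [hf] at hval1
          by_cases hkk : k' = k
          · subst hkk; simp
          · exfalso
            rw [if_neg (by simp [hkk]), if_neg (by simp)] at hval1
            revert hval1; decide
        · exact absurd heE (hz j' σ')
      have hcard : F.card ≤ 1 := by
        have := Finset.card_le_card hsub
        simpa using this
      have hF0 : F.card = 0 := by omega
      have hFe : F = ∅ := Finset.card_eq_zero.mp hF0
      have : rung a b k ∈ F := by
        apply Finset.mem_filter.mpr
        refine ⟨hmem, ?_⟩
        rw [rung, gf_mk]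
        simp [hf]
      rw [hFe] at this
      exact absurd this (Finset.notMem_empty _)
    have hempty : E = ∅ := by
      apply Finset.eq_empty_iff_forall_notMem.mpr
      intro e he
      rcases hcat e he with ⟨k, σ, rfl⟩ | ⟨k, rfl⟩ | ⟨j, σ, rfl⟩
      · exact hnp k σ he
      · exact hnr k he
      · exact hz j σ he
    have h3 := hc.three_le_length
    rw [← hEcard, hempty] at h3
    simp at h3

end Main

end RGE
namespace RGE

section Classes

set_option linter.unusedSectionVars false

variable {a b : ℕ} [NeZero a]

lemma val_mkA (k : Fin a) : (mkA a b k).val = k.val := rfl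
lemma val_mkB (j : Fin b) : (mkB a b j).val = a + j.val := rfl
lemma val_mkD (k : Fin a) : (mkD a b k).val = a + b + k.val := rfl

lemma colorClass_A (h4 : 4 ≤ a) (k : Fin a) :
    colorClass (PG a b) (cmap a b) (mkA a b k) = {pe a b k false, pe a b k true} := by
  ext e
  simp only [colorClass, Set.mem_setOf_eq, Set.mem_insert_iff, Set.mem_singleton_iff]
  constructor
  · rintro ⟨hmem, hcol⟩
    rw [edgeSet_PG h4] at hmem
    rcases hmem with ⟨k', σ, rfl⟩ | ⟨k', rfl⟩ | ⟨j, σ, rfl⟩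
    · rw [cmap_pe h4] at hcol
      have hk : k' = k := by
        have hval := congrArg Fin.val hcol
        rw [val_mkA, val_mkA] at hval
        exact Fin.ext hval
      rw [hk]
      cases σ
      · exact Or.inl rfl
      · exact Or.inr rfl
    · exfalso
      rw [cmap_rung] at hcol
      have := congrArg Fin.val hcol
      rw [val_mkD, val_mkA] at this
      have := k.isLt
      omega
    · exfalso
      rw [cmap_zedge] at hcol
      have := congrArg Fin.val hcol
      rw [val_mkB, val_mkA] at this
      have := k.isLt
      omega
  · rintro (rfl | rfl)
    · exact ⟨by rw [edgeSet_PG h4]; exact Or.inl ⟨k, false, rfl⟩, cmap_pe h4 k false⟩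
    · exact ⟨by rw [edgeSet_PG h4]; exact Or.inl ⟨k, true, rfl⟩, cmap_pe h4 k true⟩

lemma colorClass_B (h4 : 4 ≤ a) (j : Fin b) :
    colorClass (PG a b) (cmap a b) (mkB a b j) = {zedge a b j false, zedge a b j true} := by
  ext e
  simp only [colorClass, Set.mem_setOf_eq, Set.mem_insert_iff, Set.mem_singleton_iff]
  constructor
  · rintro ⟨hmem, hcol⟩
    rw [edgeSet_PG h4] at hmem
    rcases hmem with ⟨k', σ, rfl⟩ | ⟨k', rfl⟩ | ⟨j', σ, rfl⟩
    · exfalso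
      rw [cmap_pe h4] at hcol
      have := congrArg Fin.val hcol
      rw [val_mkA, val_mkB] at this
      have := k'.isLt
      omega
    · exfalso
      rw [cmap_rung] at hcol
      have := congrArg Fin.val hcol
      rw [val_mkD, val_mkB] at this
      have := j.isLt
      omega
    · rw [cmap_zedge] at hcol
      have hj : j' = j := by
        have := congrArg Fin.val hcol
        rw [val_mkB, val_mkB] at this
        exact Fin.ext (by omega)
      rw [hj]
      cases σ
      · exact Or.inl rfl
      · exact Or.inr rfl
  · rintro (rfl | rfl)
    · exact ⟨by rw [edgeSet_PG h4]; exact Or.inr (Or.inr ⟨j, false, rfl⟩), cmap_zedge j false⟩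
    · exact ⟨by rw [edgeSet_PG h4]; exact Or.inr (Or.inr ⟨j, true, rfl⟩), cmap_zedge j true⟩

lemma colorClass_D (h4 : 4 ≤ a) (k : Fin a) :
    colorClass (PG a b) (cmap a b) (mkD a b k) = {rung a b k} := by
  ext e
  simp only [colorClass, Set.mem_setOf_eq, Set.mem_singleton_iff]
  constructor
  · rintro ⟨hmem, hcol⟩
    rw [edgeSet_PG h4] at hmem
    rcases hmem with ⟨k', σ, rfl⟩ | ⟨k', rfl⟩ | ⟨j', σ, rfl⟩
    · exfalso
      rw [cmap_pe h4] at hcol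
      have := congrArg Fin.val hcol
      rw [val_mkA, val_mkD] at this
      have := k'.isLt
      omega
    · rw [cmap_rung] at hcol
      have hk : k' = k := by
        have := congrArg Fin.val hcol
        rw [val_mkD, val_mkD] at this
        exact Fin.ext (by omega)
      rw [hk]
    · exfalso
      rw [cmap_zedge] at hcol
      have := congrArg Fin.val hcol
      rw [val_mkB, val_mkD] at this
      have := j'.isLt
      omega
  · rintro rfl
    exact ⟨by rw [edgeSet_PG h4]; exact Or.inr (Or.inl ⟨k, rfl⟩), cmap_rung k⟩

lemma isMatchingTwo_pair (h4 : 4 ≤ a) (k : Fin a) :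
    IsMatchingTwo ({pe a b k false, pe a b k true} : Set (Sym2 (PV a b))) := by
  refine ⟨pe a b k false, pe a b k true, ?_, ?_, rfl⟩
  · intro h
    rw [pe_eq_iff h4] at h
    exact absurd h.2 (by decide)
  · intro v hv
    rw [pe, Sym2.mem_iff] at hv ⊢
    push_neg
    rcases hv with rfl | rfl <;> exact ⟨by simp, by simp⟩

lemma isStarTwo_z (h4 : 4 ≤ a) (j : Fin b) :
    IsStarTwo ({zedge a b j false, zedge a b j true} : Set (Sym2 (PV a b))) := by
  refine ⟨zedge a b j false, zedge a b j true, ?_, ⟨Sum.inr j, ?_, ?_⟩, rfl⟩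
  · intro h
    rw [zedge, zedge, Sym2.eq_iff] at h
    simp at h
  · rw [zedge, Sym2.mem_iff]; exact Or.inl rfl
  · rw [zedge, Sym2.mem_iff]; exact Or.inl rfl

end Classes

end RGE

/-- **Example (tightness of `2α + β > 1`).** For `α, β > 0` with `2α + β = 1` and a positive
integer `n` with `a = αn` an integer that is at least `4` and divisible by two, and `b = βn`
an integer, there is an `n`-vertex graph `G` with an edge coloring with `n` colors such that
`αn` color classes are matchings of size two, `βn` are stars of size two, the remaining
`(1 − α − β)n = αn` are single edges, and every rainbow cycle of `G` has length at least
`min(αn, βn/2)`. -/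
theorem rainbow_girth_linear_example (α β : ℝ) (hα : 0 < α) (hβ : 0 < β)
    (hαβ : 2 * α + β = 1) (n a b : ℕ) (hn : 0 < n)
    (ha : (a : ℝ) = α * n) (hb : (b : ℝ) = β * n) (ha4 : 4 ≤ a) (ha2 : 2 ∣ a) :
    ∃ (V : Type) (_ : Fintype V) (G : SimpleGraph V) (c : Sym2 V → Fin n),
      Fintype.card V = n ∧
      ∃ A B D : Finset (Fin n),
        Disjoint A B ∧ Disjoint A D ∧ Disjoint B D ∧ A ∪ B ∪ D = Finset.univ ∧
        A.card = a ∧ B.card = b ∧ D.card = a ∧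
        (∀ i ∈ A, IsMatchingTwo (colorClass G c i)) ∧
        (∀ i ∈ B, IsStarTwo (colorClass G c i)) ∧
        (∀ i ∈ D, IsSingleEdge (colorClass G c i)) ∧
        (∀ (v : V) (w : G.Walk v v), w.IsCycle → (w.edges.map c).Nodup →
          min (α * n) (β * n / 2) ≤ (w.length : ℝ)) := by
  have hncast : ((2*a + b : ℕ) : ℝ) = (n : ℝ) := by
    push_cast
    rw [ha, hb]
    calc 2*(α*(n:ℝ)) + β*(n:ℝ) = (2*α+β)*(n:ℝ) := by ring
    _ = (n : ℝ) := by rw [hαβ]; ring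
  have hneq : n = 2*a + b := by exact_mod_cast hncast.symm
  subst hneq
  haveI : NeZero a := ⟨by omega⟩
  classical
  refine ⟨RGE.PV a b, inferInstance, RGE.PG a b, RGE.cmap a b, ?_, ?_⟩
  · simp only [RGE.PV, Fintype.card_sum, Fintype.card_prod, Fintype.card_bool, Fintype.card_fin]
    omega
  · refine ⟨(Finset.univ : Finset (Fin a)).map ⟨fun k => RGE.mkA a b k, show Function.Injective _ from fun k k' h => by
        have hv := congrArg Fin.val h
        rw [RGE.val_mkA, RGE.val_mkA] at hv
        exact Fin.ext hv⟩,
      (Finset.univ : Finset (Fin b)).map ⟨fun j => RGE.mkB a b j, show Function.Injective _ from fun j j' h => by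
        have hv := congrArg Fin.val h
        rw [RGE.val_mkB, RGE.val_mkB] at hv
        exact Fin.ext (by omega)⟩,
      (Finset.univ : Finset (Fin a)).map ⟨fun k => RGE.mkD a b k, show Function.Injective _ from fun k k' h => by
        have hv := congrArg Fin.val h
        rw [RGE.val_mkD, RGE.val_mkD] at hv
        exact Fin.ext (by omega)⟩,
      ?_, ?_, ?_, ?_, ?_, ?_, ?_, ?_, ?_, ?_, ?_⟩
    · rw [Finset.disjoint_left]
      intro i hiA hiB
      obtain ⟨k, -, rfl⟩ := Finset.mem_map.mp hiA
      obtain ⟨j, -, hj⟩ := Finset.mem_map.mp hiB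
      have hv := congrArg Fin.val hj
      simp only [Function.Embedding.coeFn_mk, RGE.val_mkA, RGE.val_mkB] at hv
      have := k.isLt
      omega
    · rw [Finset.disjoint_left]
      intro i hiA hiD
      obtain ⟨k, -, rfl⟩ := Finset.mem_map.mp hiA
      obtain ⟨k', -, hk'⟩ := Finset.mem_map.mp hiD
      have hv := congrArg Fin.val hk'
      simp only [Function.Embedding.coeFn_mk, RGE.val_mkA, RGE.val_mkD] at hv
      have := k.isLt
      omega
    · rw [Finset.disjoint_left]
      intro i hiB hiD
      obtain ⟨j, -, rfl⟩ := Finset.mem_map.mp hiB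
      obtain ⟨k', -, hk'⟩ := Finset.mem_map.mp hiD
      have hv := congrArg Fin.val hk'
      simp only [Function.Embedding.coeFn_mk, RGE.val_mkB, RGE.val_mkD] at hv
      have := j.isLt
      omega
    · apply Finset.eq_univ_of_forall
      intro i
      simp only [Finset.mem_union, Finset.mem_map, Finset.mem_univ, true_and,
        Function.Embedding.coeFn_mk]
      have hi := i.isLt
      rcases Nat.lt_or_ge i.val a with h1 | h1
      · exact Or.inl (Or.inl ⟨⟨i.val, h1⟩, Fin.ext rfl⟩)
      · rcases Nat.lt_or_ge i.val (a + b) with h2 | h2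
        · exact Or.inl (Or.inr ⟨⟨i.val - a, by omega⟩,
            Fin.ext (show a + (i.val - a) = i.val by omega)⟩)
        · exact Or.inr ⟨⟨i.val - a - b, by omega⟩,
            Fin.ext (show a + b + (i.val - a - b) = i.val by omega)⟩
    · simp
    · simp
    · simp
    · intro i hi
      obtain ⟨k, -, rfl⟩ := Finset.mem_map.mp hi
      simp only [Function.Embedding.coeFn_mk]
      rw [RGE.colorClass_A (by omega)]
      exact RGE.isMatchingTwo_pair (by omega) k
    · intro i hi
      obtain ⟨j, -, rfl⟩ := Finset.mem_map.mp hi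
      simp only [Function.Embedding.coeFn_mk]
      rw [RGE.colorClass_B (by omega)]
      exact RGE.isStarTwo_z (by omega) j
    · intro i hi
      obtain ⟨k, -, rfl⟩ := Finset.mem_map.mp hi
      simp only [Function.Embedding.coeFn_mk]
      rw [RGE.colorClass_D (by omega)]
      exact ⟨RGE.rung a b k, rfl⟩
    · intro v w hcyc hrb
      have hlen : a ≤ w.length := RGE.main_length (by omega) w hcyc hrb
      refine le_trans (min_le_left _ _) ?_
      rw [← ha]
      exact_mod_cast hlen
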